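/- Let n = 2^m, let f: F^m → F^m be a bijective APN operator, let P = { x ∈ F^n : Σx_i = 0, Σ x_i α_i = 0 } and P' = { x ∈ F^n : Σx_i = 0, Σ x_i f(α_i) = 0 } be the two associated Hamming codes, let Q be an odd coset of P'. Then the code R(P,Q) = { r(p) : p ∈ P } ⊆ X^n has minimum Hamming distance at least 5, and together with the fact that the radius-2 ball { y ∈ X^n : d_H(0^n, y) ≤ 2 } is a diameter-4 anticode of cardinality n², R(P,Q) is a diameter perfect distance-5 code (|R(P,Q)| · n² = |X^n|). -/

import Mathlib

/-!
Every `p ∈ P` has exactly one neighbour in the odd coset `Q`, namely `p + e_i` for the unique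
`i` with `f α_i = β' + Σ_j p_j f α_j`; so `r(p)` is `p` with a `*` at `i`, and `R(P,Q)` is in
bijection with `P`, of size `2^(n-m-1)`. Let `p ≠ p'` in `P` have stars at `i`, `i'`. If
`i = i'`, then `p + p'` lies in both Hamming codes, so has weight at least 6 because `f` is APN,
and the two `r`-words differ in at least 5 places. If `i ≠ i'`, they differ at `i`, `i'` and
wherever `p`, `p'` (equivalently their neighbours `q`, `q'`) differ; counting gives
`2 d(r(p), r(p')) = d(p, p') + d(q, q') + 2 ≥ 4 + 4 + 2`, as `P` and `Q` are cosets of codes of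
minimum distance 4.
-/

/-- Binary words of length `n`. -/
abbrev BW (n : ℕ) := Fin n → ZMod 2

/-- Ternary words of length `n` over `{0,1,*}`, with `none` playing the role of `*`. -/
abbrev TW (n : ℕ) := Fin n → Option (ZMod 2)

/-- Membership in `X^n`: exactly one coordinate equals `*`. -/
def isX {n : ℕ} (w : TW n) : Prop := (Finset.univ.filter (fun i => w i = none)).card = 1

/-- Embedding of binary words into ternary words. -/
def emb {n : ℕ} (x : BW n) : TW n := fun i => some (x i)

/-- Coset `{ x ∈ F^n : Σ x_i = ε, Σ x_i α_i = β }` of the Hamming code with columns `α`. -/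
def coset {n m : ℕ} (α : Fin n → BW m) (ε : ZMod 2) (β : BW m) : Set (BW n) :=
  {x | (∑ i, x i) = ε ∧ (∑ i, x i • α i) = β}

/-- `r(p)` for an edge `{p, q}`: `*` where `p` and `q` differ, `p` elsewhere. -/
def rword {n : ℕ} (p q : BW n) : TW n := fun i => if p i = q i then some (p i) else none

open Function

lemma ZMod.eq_one_of_ne_zero_two {a : ZMod 2} (ha : a ≠ 0) : a = 1 := by
  revert a; decide

lemma BW.neg_eq_self {m : ℕ} (u : BW m) : -u = u :=
  funext fun i => ZMod.neg_eq_self_mod_two (u i)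

lemma BW.add_add_cancel_left {m : ℕ} (u w : BW m) : u + (u + w) = w := by
  nth_rw 1 [← BW.neg_eq_self u]
  exact neg_add_cancel_left u w

lemma BW.eq_of_add_eq_zero {m : ℕ} {u v : BW m} (h : u + v = 0) : u = v := by
  rw [add_eq_zero_iff_eq_neg, BW.neg_eq_self] at h; exact h

section ParityCheck

variable {n m : ℕ}

def parityCheck (v : Fin n → BW m) : BW n →+ ZMod 2 × BW m where
  toFun x := (∑ i, x i, ∑ i, x i • v i)
  map_zero' := by simp
  map_add' x y := by simp [Finset.sum_add_distrib, add_smul]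

variable {v : Fin n → BW m}

lemma mem_coset_iff {x : BW n} {ε : ZMod 2} {β : BW m} :
    x ∈ coset v ε β ↔ parityCheck v x = (ε, β) := by
  simp [coset, parityCheck]

lemma parityCheck_single (i : Fin n) : parityCheck v (Pi.single i 1) = (1, v i) := by
  simp [parityCheck, Pi.single_apply]

lemma sum_smul_eq_sum_filter_ne_zero {M : Type*} [AddCommMonoid M] [Module (ZMod 2) M]
    (x : BW n) (w : Fin n → M) : ∑ i, x i • w i = ∑ i with x i ≠ 0, w i := by
  rw [Finset.sum_filter]
  refine Finset.sum_congr rfl fun i _ => ?_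
  by_cases hx : x i = 0
  · simp [hx]
  · simp [ZMod.eq_one_of_ne_zero_two hx]

lemma parityCheck_eq_sum_support (x : BW n) :
    parityCheck v x = ((hammingNorm x : ZMod 2), ∑ i with x i ≠ 0, v i) := by
  have hsum := sum_smul_eq_sum_filter_ne_zero x fun _ => (1 : ZMod 2)
  simp only [smul_eq_mul, mul_one, Finset.sum_const, nsmul_eq_mul] at hsum
  simp [parityCheck, sum_smul_eq_sum_filter_ne_zero, hsum, hammingNorm]

lemma sub_mem_ker_of_mem_coset {x y : BW n} {ε : ZMod 2} {β : BW m}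
    (hx : x ∈ coset v ε β) (hy : y ∈ coset v ε β) : parityCheck v (x - y) = 0 := by
  rw [mem_coset_iff] at hx hy
  rw [map_sub, hx, hy, sub_self]

lemma four_le_hammingNorm (hv : Injective v) {x : BW n} (hx : parityCheck v x = 0)
    (hx0 : x ≠ 0) : 4 ≤ hammingNorm x := by
  rw [parityCheck_eq_sum_support, Prod.mk_eq_zero] at hx
  have heven : 2 ∣ hammingNorm x := (ZMod.natCast_eq_zero_iff _ 2).mp hx.1
  have hpos : hammingNorm x ≠ 0 := hammingNorm_ne_zero_iff.mpr hx0
  have hne2 : hammingNorm x ≠ 2 := by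
    intro h2
    obtain ⟨j, k, hjk, hs⟩ := Finset.card_eq_two.mp h2
    rw [hs, Finset.sum_pair hjk] at hx
    exact hjk (hv (BW.eq_of_add_eq_zero hx.2))
  omega

lemma four_le_hammingDist_of_mem_coset (hv : Injective v) {x y : BW n} {ε : ZMod 2}
    {β : BW m} (hx : x ∈ coset v ε β) (hy : y ∈ coset v ε β) (hxy : x ≠ y) :
    4 ≤ hammingDist x y := by
  rw [hammingDist_eq_hammingNorm, neg_add_eq_sub]
  exact four_le_hammingNorm hv (sub_mem_ker_of_mem_coset hy hx) (sub_ne_zero.mpr hxy.symm)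

lemma parityCheck_surjective (hv : Surjective v) : Surjective (parityCheck v) := by
  have hodd : ∀ b, (1, b) ∈ (parityCheck v).range := fun b => by
    obtain ⟨i, rfl⟩ := hv b
    exact ⟨Pi.single i 1, parityCheck_single i⟩
  rintro ⟨ε, b⟩
  obtain rfl | rfl : ε = 0 ∨ ε = 1 := by revert ε; decide
  · simpa using (parityCheck v).range.sub_mem (hodd b) (hodd 0)
  · exact hodd b

lemma ncard_coset_zero_mul (hv : Surjective v) : (coset v 0 0).ncard * 2 ^ (m + 1) = 2 ^ n := by
  have hker : coset v 0 0 = (parityCheck v).ker := by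
    ext x; simp [mem_coset_iff, Prod.zero_eq_mk]
  have := (parityCheck v).ker.card_mul_index
  rw [AddSubgroup.index_ker, AddMonoidHom.range_eq_top.mpr (parityCheck_surjective hv),
    AddSubgroup.card_top] at this
  rw [hker, ← Nat.card_coe_set_eq, SetLike.coe_sort_coe]
  simpa [Nat.card_eq_fintype_card, pow_succ, mul_comm] using this

end ParityCheck

section APN

variable {m : ℕ}

def IsAPN (f : BW m → BW m) : Prop :=
  ∀ a b : BW m, ¬(a = 0 ∧ b = 0) →
    Set.ncard {x : BW m | f x + f (x + a) = b} = 0 ∨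
    Set.ncard {x : BW m | f x + f (x + a) = b} = 2

variable {f : BW m → BW m}

lemma IsAPN.ncard_le_two (hf : IsAPN f) {a : BW m} (ha : a ≠ 0) (b : BW m) :
    Set.ncard {x : BW m | f x + f (x + a) = b} ≤ 2 := by
  rcases hf a b fun h => ha h.1 with h | h <;> omega

lemma IsAPN.add_ne_add (hf : IsAPN f) {a b c d : BW m} (hab : a ≠ b) (hac : a ≠ c)
    (hbc : b ≠ c) (h : a + b = c + d) : f a + f b ≠ f c + f d := by
  intro hfab
  -- `a`, `b` and `c` are three solutions of `f x + f (x + (a + b)) = f a + f b`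
  have h3 : 2 < Set.ncard {x : BW m | f x + f (x + (a + b)) = f a + f b} := by
    refine (Set.two_lt_ncard_iff (Set.toFinite _)).mpr ⟨a, b, c, ?_, ?_, ?_, hab, hac, hbc⟩
    · simp only [Set.mem_ofPred_eq, BW.add_add_cancel_left]
    · simp only [Set.mem_ofPred_eq, add_comm a b, BW.add_add_cancel_left, add_comm (f b)]
    · simp only [Set.mem_ofPred_eq, h, BW.add_add_cancel_left, hfab]
  have := hf.ncard_le_two (fun h0 => hab (BW.eq_of_add_eq_zero h0)) (f a + f b)
  omega

lemma six_le_hammingNorm {n : ℕ} {α : Fin n → BW m} (hα : Injective α) (hf : IsAPN f)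
    {x : BW n} (hx : parityCheck α x = 0) (hfx : parityCheck (fun i => f (α i)) x = 0)
    (hx0 : x ≠ 0) : 6 ≤ hammingNorm x := by
  have h4 := four_le_hammingNorm hα hx hx0
  rw [parityCheck_eq_sum_support, Prod.mk_eq_zero] at hx hfx
  have heven : 2 ∣ hammingNorm x := (ZMod.natCast_eq_zero_iff _ 2).mp hx.1
  suffices hne4 : hammingNorm x ≠ 4 by omega
  intro hcard
  obtain ⟨j, s, hjs, hs, hs3⟩ := Finset.card_eq_succ.mp hcard
  obtain ⟨k, l, r, hkl, hkr, hlr, rfl⟩ := Finset.card_eq_three.mp hs3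
  simp only [Finset.mem_insert, Finset.mem_singleton, not_or] at hjs
  obtain ⟨hjk, hjl, hjr⟩ := hjs
  rw [← hs, Finset.sum_insert (by simp [hjk, hjl, hjr]), Finset.sum_insert (by simp [hkl, hkr]),
    Finset.sum_pair hlr, ← add_assoc] at hx hfx
  exact hf.add_ne_add (hα.ne hjk) (hα.ne hjl) (hα.ne hkl) (BW.eq_of_add_eq_zero hx.2)
    (BW.eq_of_add_eq_zero hfx.2)

end APN

section RWord

variable {n : ℕ}

lemma hammingDist_eq_one_iff {p q : BW n} :
    hammingDist p q = 1 ↔ ∃ i, q = p + Pi.single i 1 := by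
  constructor
  · intro h
    obtain ⟨i, hi⟩ := Finset.card_eq_one.mp h
    refine ⟨i, funext fun j => ?_⟩
    have hj : p j ≠ q j ↔ j = i := by simpa using Finset.ext_iff.mp hi j
    by_cases hji : j = i
    · subst hji
      have : ∀ a b : ZMod 2, a ≠ b → b = a + 1 := by decide
      simpa using this _ _ (hj.mpr rfl)
    · simpa [hji] using (not_not.mp (mt hj.mp hji)).symm
  · rintro ⟨i, rfl⟩
    refine Finset.card_eq_one.mpr ⟨i, Finset.ext fun j => ?_⟩
    by_cases hji : j = i
    · subst hji; simp
    · simp [hji]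

lemma rword_add_single_apply (p : BW n) (i j : Fin n) :
    rword p (p + Pi.single i 1) j = if j = i then none else some (p j) := by
  by_cases hji : j = i
  · subst hji; simp [rword]
  · simp [rword, hji]

lemma hammingDist_le_hammingDist_rword_add_one (p p' : BW n) (i i' : Fin n) :
    hammingDist p p' ≤
      hammingDist (rword p (p + Pi.single i 1)) (rword p' (p' + Pi.single i' 1)) + 1 := by
  refine (Finset.card_le_card fun j hj => ?_).trans (Finset.card_insert_le i _)
  by_cases hji : j = i
  · simp [hji]
  · refine Finset.mem_insert_of_mem ?_
    simp only [Finset.mem_filter, Finset.mem_univ, true_and] at hj ⊢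
    rw [rword_add_single_apply, rword_add_single_apply, if_neg hji]
    split_ifs <;> simp [hj]

lemma two_mul_hammingDist_rword {i i' : Fin n} (hii' : i ≠ i') (p p' : BW n) :
    2 * hammingDist (rword p (p + Pi.single i 1)) (rword p' (p' + Pi.single i' 1)) =
      hammingDist p p' + hammingDist (p + Pi.single i 1) (p' + Pi.single i' 1) + 2 := by
  have htwo : ∑ j, ((if j = i then 1 else 0) + if j = i' then 1 else 0) = 2 := by
    simp [Finset.sum_add_distrib]
  simp only [hammingDist, Finset.card_filter, Finset.mul_sum]
  refine Eq.trans ?_ (congrArg (_ + ·) htwo)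
  rw [← Finset.sum_add_distrib, ← Finset.sum_add_distrib]
  refine Finset.sum_congr rfl fun j _ => ?_
  simp only [rword_add_single_apply, Pi.add_apply, Pi.single_apply]
  generalize p j = a, p' j = b
  by_cases hji : j = i <;> by_cases hji' : j = i'
  · exact absurd (hji.symm.trans hji') hii'
  all_goals simp only [hji, hji', hii', hii'.symm, if_true, if_false]; revert a b; decide

end RWord

section RCode

variable {n m : ℕ}

def rCode (P Q : Set (BW n)) : Set (TW n) :=
  {c | ∃ p q : BW n, p ∈ P ∧ q ∈ Q ∧ hammingDist p q = 1 ∧ c = rword p q}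

lemma exists_mem_coset_hammingDist_eq_one {v : Fin n → BW m} (hv : Surjective v) {p : BW n}
    (hp : ∑ i, p i = 0) (β : BW m) : ∃ q ∈ coset v 1 β, hammingDist p q = 1 := by
  obtain ⟨i, hi⟩ := hv (β - ∑ j, p j • v j)
  refine ⟨p + Pi.single i 1, ?_, hammingDist_eq_one_iff.mpr ⟨i, rfl⟩⟩
  rw [mem_coset_iff, map_add, parityCheck_single, hi]
  simp [parityCheck, hp]

lemma eq_of_mem_coset_of_hammingDist_eq_one {v : Fin n → BW m} (hv : Injective v) {ε : ZMod 2}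
    {β : BW m} {p q q' : BW n} (hq : q ∈ coset v ε β) (hq' : q' ∈ coset v ε β)
    (hpq : hammingDist p q = 1) (hpq' : hammingDist p q' = 1) : q = q' := by
  by_contra hne
  have h4 := four_le_hammingDist_of_mem_coset hv hq hq' hne
  have := hammingDist_triangle q p q'
  rw [hammingDist_comm q p] at this
  omega

variable {α : Fin n → BW m} {f : BW m → BW m} {β' : BW m}

theorem five_le_hammingDist_rword (hα : Injective α) (hf : Injective f) (hAPN : IsAPN f)
    {p p' q q' : BW n} (hp : p ∈ coset α 0 0) (hp' : p' ∈ coset α 0 0)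
    (hq : q ∈ coset (fun i => f (α i)) 1 β') (hq' : q' ∈ coset (fun i => f (α i)) 1 β')
    (hpq : hammingDist p q = 1) (hpq' : hammingDist p' q' = 1) (hne : p ≠ p') :
    5 ≤ hammingDist (rword p q) (rword p' q') := by
  have hPP := four_le_hammingDist_of_mem_coset hα hp hp' hne
  obtain ⟨i, rfl⟩ := hammingDist_eq_one_iff.mp hpq
  obtain ⟨i', rfl⟩ := hammingDist_eq_one_iff.mp hpq'
  rcases eq_or_ne i i' with rfl | hii'
  · -- `p' - p = q' - q` is a nonzero word in both Hamming codes
    have h6 : 6 ≤ hammingDist p p' := by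
      rw [hammingDist_eq_hammingNorm, neg_add_eq_sub]
      refine six_le_hammingNorm hα hAPN (sub_mem_ker_of_mem_coset hp' hp) ?_
        (sub_ne_zero.mpr hne.symm)
      simpa using sub_mem_ker_of_mem_coset hq' hq
    have := hammingDist_le_hammingDist_rword_add_one p p' i i
    omega
  · have hqq : p + Pi.single i 1 ≠ p' + Pi.single i' 1 := by
      intro h
      have := hammingDist_triangle p (p + Pi.single i 1) p'
      rw [hpq, h, hammingDist_comm (p' + _) p', hpq'] at this
      omega
    have hQQ := four_le_hammingDist_of_mem_coset (hf.comp hα) hq hq' hqq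
    have := two_mul_hammingDist_rword hii' p p'
    omega

theorem five_le_hammingDist_of_mem_rCode (hα : Injective α) (hf : Injective f) (hAPN : IsAPN f)
    {c c' : TW n} (hc : c ∈ rCode (coset α 0 0) (coset (fun i => f (α i)) 1 β'))
    (hc' : c' ∈ rCode (coset α 0 0) (coset (fun i => f (α i)) 1 β')) (hne : c ≠ c') :
    5 ≤ hammingDist c c' := by
  obtain ⟨p, q, hp, hq, hpq, rfl⟩ := hc
  obtain ⟨p', q', hp', hq', hpq', rfl⟩ := hc'
  refine five_le_hammingDist_rword hα hf hAPN hp hp' hq hq' hpq hpq' fun h => hne ?_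
  subst h
  rw [eq_of_mem_coset_of_hammingDist_eq_one (hf.comp hα) hq hq' hpq hpq']

lemma ncard_rCode (hα : Bijective α) (hf : Bijective f) (hAPN : IsAPN f) :
    (rCode (coset α 0 0) (coset (fun i => f (α i)) 1 β')).ncard = (coset α 0 0).ncard := by
  have hfα : Bijective (fun i => f (α i)) := hf.comp hα
  choose nbr hnbr hnbr_dist using fun p (hp : p ∈ coset α 0 0) =>
    exists_mem_coset_hammingDist_eq_one hfα.surjective hp.1 β'
  symm
  refine Set.ncard_congr (fun p hp => rword p (nbr p hp))
    (fun p hp => ⟨p, nbr p hp, hp, hnbr p hp, hnbr_dist p hp, rfl⟩) ?_ ?_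
  · intro p p' hp hp' heq
    by_contra hne
    have := five_le_hammingDist_rword hα.injective hf.injective hAPN hp hp' (hnbr p hp)
      (hnbr p' hp') (hnbr_dist p hp) (hnbr_dist p' hp') hne
    rw [heq, hammingDist_self] at this
    omega
  · rintro _ ⟨p, q, hp, hq, hpq, rfl⟩
    exact ⟨p, hp, by rw [eq_of_mem_coset_of_hammingDist_eq_one hfα.injective (hnbr p hp) hq
      (hnbr_dist p hp) hpq]⟩

end RCode

section Anticode

variable {n : ℕ}

/-- `0^n` with a `*` at `i` and, if `j ≠ i`, a `1` at `j`; these are the `n²` words of the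
radius-2 ball. -/
def starWord (i j : Fin n) : TW n := fun k => if k = i then none else emb (Pi.single j 1) k

lemma starWord_injective : Injective (uncurry (starWord (n := n))) := by
  rintro ⟨i, j⟩ ⟨i', j'⟩ (h : starWord i j = starWord i' j')
  have hi : i = i' := by simpa [starWord, emb] using congrFun h i
  subst hi
  suffices j = j' by rw [this]
  have hj : ∀ {j j'}, starWord i j = starWord i j' → j ≠ i → j = j' := by
    intro j j' h hji
    simpa [starWord, emb, hji, Pi.single_apply, eq_comm] using congrFun h j
  by_cases hji : j = i
  · by_cases hj'i : j' = i
    · rw [hji, hj'i]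
    · exact (hj h.symm hj'i).symm
  · exact hj h hji

lemma isX_starWord (i j : Fin n) : isX (starWord i j) :=
  Finset.card_eq_one.mpr ⟨i, by ext k; simp [starWord, emb]⟩

lemma hammingDist_starWord_le_two (i j : Fin n) : hammingDist (starWord i j) (emb 0) ≤ 2 := by
  refine (Finset.card_le_card fun k hk => ?_).trans (Finset.card_le_two (a := i) (b := j))
  by_contra hij
  simp only [Finset.mem_insert, Finset.mem_singleton, not_or] at hij
  simp [starWord, emb, hij.1, hij.2] at hk

lemma starWord_eq_of_forall {y : TW n} {i j : Fin n} (hnone : ∀ k, y k = none ↔ k = i)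
    (hone : ∀ k, k ≠ i → (y k = some 1 ↔ k = j)) : starWord i j = y := by
  funext k
  by_cases hki : k = i
  · simp [starWord, hki, (hnone i).mpr rfl]
  obtain ⟨b, hb⟩ := Option.ne_none_iff_exists'.mp (mt (hnone k).mp hki)
  have hbj := hone k hki
  rw [hb, Option.some_inj] at hbj
  simp only [starWord, emb, if_neg hki, hb, Option.some_inj, Pi.single_apply]
  by_cases hkj : k = j
  · simp [hkj, hbj.mpr hkj]
  · rw [if_neg hkj]
    by_contra h0
    exact hkj (hbj.mp (ZMod.eq_one_of_ne_zero_two (Ne.symm h0)))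

lemma exists_starWord_eq {y : TW n} (hX : isX y) (hd : hammingDist y (emb 0) ≤ 2) :
    ∃ i j, starWord i j = y := by
  obtain ⟨i, hi⟩ := Finset.card_eq_one.mp hX
  have hnone : ∀ k, y k = none ↔ k = i := by simpa using Finset.ext_iff.mp hi
  -- `y` differs from `0^n` at its `*` and at each of its `1`s
  have hone : ({k | y k = some 1} : Finset (Fin n)).card ≤ 1 := by
    have hsub : insert i ({k | y k = some 1} : Finset (Fin n)) ⊆
        ({k | y k ≠ emb 0 k} : Finset (Fin n)) := by
      intro k hk
      simp only [Finset.mem_insert, Finset.mem_filter, Finset.mem_univ, true_and] at hk ⊢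
      rcases hk with rfl | hk
      · simp [emb, (hnone k).mpr rfl]
      · simp [emb, hk]
    have hcard := (Finset.card_le_card hsub).trans hd
    rw [Finset.card_insert_of_notMem (by simp [(hnone i).mpr rfl])] at hcard
    omega
  by_cases h1 : ∃ j, y j = some 1
  · obtain ⟨j, hj⟩ := h1
    refine ⟨i, j, starWord_eq_of_forall hnone fun k _ => ⟨fun hk => ?_, fun h => h ▸ hj⟩⟩
    exact Finset.card_le_one.mp hone k (by simpa using hk) j (by simpa using hj)
  · simp only [not_exists] at h1
    exact ⟨i, i, starWord_eq_of_forall hnone fun k hki => ⟨fun h => absurd h (h1 k),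
      fun h => absurd h hki⟩⟩

lemma ncard_isX_hammingDist_le_two :
    {y : TW n | isX y ∧ hammingDist y (emb 0) ≤ 2}.ncard = n ^ 2 := by
  have hrange : {y : TW n | isX y ∧ hammingDist y (emb 0) ≤ 2} =
      Set.range (uncurry (starWord (n := n))) := by
    ext y
    constructor
    · rintro ⟨hX, hd⟩
      obtain ⟨i, j, rfl⟩ := exists_starWord_eq hX hd
      exact ⟨(i, j), rfl⟩
    · rintro ⟨⟨i, j⟩, rfl⟩
      exact ⟨isX_starWord i j, hammingDist_starWord_le_two i j⟩
  rw [hrange, Set.ncard_range_of_injective starWord_injective]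
  simp [sq]

end Anticode

theorem stmt18_general {m : ℕ} (n : ℕ) (hn : n = 2 ^ m)
    (α : Fin n → BW m) (hα : Function.Bijective α)
    (f : BW m → BW m) (hf : Function.Bijective f)
    (hAPN : ∀ a b : BW m, ¬(a = 0 ∧ b = 0) →
      Set.ncard {x : BW m | f x + f (x + a) = b} = 0 ∨
      Set.ncard {x : BW m | f x + f (x + a) = b} = 2)
    (β' : BW m) :
    let P : Set (BW n) := coset α 0 0
    let Q : Set (BW n) := coset (fun i => f (α i)) 1 β'
    let R : Set (TW n) :=
      {c | ∃ p q : BW n, p ∈ P ∧ q ∈ Q ∧ hammingDist p q = 1 ∧ c = rword p q}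
    let A : Set (TW n) := {y | isX y ∧ hammingDist y (emb 0) ≤ 2}
    (∀ c ∈ R, ∀ c' ∈ R, c ≠ c' → 5 ≤ hammingDist c c') ∧
    Set.ncard A = n ^ 2 ∧
    (∀ y ∈ A, ∀ y' ∈ A, hammingDist y y' ≤ 4) ∧
    Set.ncard R * n ^ 2 = n * 2 ^ (n - 1) := by
  intro P Q R A
  refine ⟨?_, ncard_isX_hammingDist_le_two, ?_, ?_⟩
  · exact fun c hc c' hc' =>
      five_le_hammingDist_of_mem_rCode hα.injective hf.injective hAPN hc hc'
  · intro y hy y' hy'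
    calc hammingDist y y' ≤ hammingDist y (emb 0) + hammingDist (emb 0) y' :=
          hammingDist_triangle _ _ _
      _ ≤ 2 + 2 := add_le_add hy.2 (hammingDist_comm y' (emb 0) ▸ hy'.2)
  · have hP : P.ncard * 2 ^ (m + 1) = 2 ^ n := ncard_coset_zero_mul hα.surjective
    rw [show R.ncard = P.ncard from ncard_rCode hα hf hAPN]
    generalize P.ncard = K at hP ⊢
    obtain ⟨t, rfl⟩ : ∃ t, n = t + 1 := ⟨n - 1, by have := @Nat.one_le_two_pow m; omega⟩
    rw [pow_succ, ← hn, pow_succ] at hP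
    have hK : K * (t + 1) = 2 ^ t := by linarith
    rw [Nat.add_sub_cancel, ← hK]
    ring

/-- let `n = 2^m`, `f : F^m → F^m` a bijective APN operator,
`P = { x : Σ x_i = 0, Σ x_i α_i = 0 }`, `P' = { x : Σ x_i = 0, Σ x_i f(α_i) = 0 }` the two
associated Hamming codes, and `Q` an odd coset of `P'`.  Then `R(P,Q) ⊆ X^n` has minimum
distance at least 5; moreover the radius-2 ball in `X^n` around `0^n` is a diameter-4
anticode of cardinality `n²`, and `|R(P,Q)| · n² = |X^n|`, so `R(P,Q)` is a diameter
perfect distance-5 code. -/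
theorem stmt18 {m : ℕ} (hm : 2 ≤ m) (n : ℕ) (hn : n = 2 ^ m)
    (α : Fin n → BW m) (hα : Function.Bijective α)
    (f : BW m → BW m) (hf : Function.Bijective f)
    (hAPN : ∀ a b : BW m, ¬(a = 0 ∧ b = 0) →
      Set.ncard {x : BW m | f x + f (x + a) = b} = 0 ∨
      Set.ncard {x : BW m | f x + f (x + a) = b} = 2)
    (β' : BW m) :
    let P : Set (BW n) := coset α 0 0
    let Q : Set (BW n) := coset (fun i => f (α i)) 1 β'
    let R : Set (TW n) :=
      {c | ∃ p q : BW n, p ∈ P ∧ q ∈ Q ∧ hammingDist p q = 1 ∧ c = rword p q}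
    let A : Set (TW n) := {y | isX y ∧ hammingDist y (emb 0) ≤ 2}
    (∀ c ∈ R, ∀ c' ∈ R, c ≠ c' → 5 ≤ hammingDist c c') ∧
    Set.ncard A = n ^ 2 ∧
    (∀ y ∈ A, ∀ y' ∈ A, hammingDist y y' ≤ 4) ∧
    Set.ncard R * n ^ 2 = n * 2 ^ (n - 1) :=
  stmt18_general n hn α hα f hf hAPN β'
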